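/- Let I be a Borel-fixed ideal in R = k[x_1,...,x_n] with d = dim R/I, and let s ≥ d. Then the s-reduction number of R/I equals the reduction number with respect to the ideal generated by the last s variables: r_s(R/I) = r_{(x_{n-s+1},...,x_n)}(R/I). -/

import Mathlib

open MvPolynomial

noncomputable section

/-- The total degree of a monomial exponent vector. -/
def monDeg {n : ℕ} (A : Fin n →₀ ℕ) : ℕ := A.sum fun _ e => e

/-- `BorelSpec A B` : the monomial `x^B` is a Borel specialization of `x^A`,
i.e. `x^B` is obtained from `x^A` by replacing every variable `x_i` of `x^A`
by a variable `x_{f i}` with `f i ≤ i`. -/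
def BorelSpec {n : ℕ} (A B : Fin n →₀ ℕ) : Prop :=
  ∃ f : Fin n → Fin n, (∀ i, f i ≤ i) ∧ B = A.mapDomain f

/-- `borelPSet A` : the set of (exponent vectors of) monomials that can be
Borel-specialized to `x^A`. -/
def borelPSet {n : ℕ} (A : Fin n →₀ ℕ) : Set (Fin n →₀ ℕ) := {C | BorelSpec C A}

/-- A monomial ideal: an ideal generated by monomials. -/
def IsMonomialIdeal {k : Type*} [Field k] {n : ℕ} (I : Ideal (MvPolynomial (Fin n) k)) : Prop :=
  ∃ S : Set (Fin n →₀ ℕ), I = Ideal.span ((fun A => (monomial A (1 : k))) '' S)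

/-- Borel-fixed: `I` is fixed by every invertible linear substitution sending each
variable `x_i` to a linear combination of the variables `x_j` with `j ≤ i`
(the Borel group of upper triangular invertible matrices). -/
def IsBorelFixed {k : Type*} [Field k] {n : ℕ} (I : Ideal (MvPolynomial (Fin n) k)) : Prop :=
  ∀ g : Matrix (Fin n) (Fin n) k, IsUnit g.det → (∀ i j : Fin n, i < j → g i j = 0) →
    I.map (aeval (fun i => ∑ j, MvPolynomial.C (g i j) * X j) :
      MvPolynomial (Fin n) k →ₐ[k] MvPolynomial (Fin n) k) = I

/-- The Hilbert function `t ↦ dim_k (R/I)_t`. -/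
def hilb {k : Type*} [Field k] {n : ℕ} (I : Ideal (MvPolynomial (Fin n) k)) (t : ℕ) : ℕ :=
  Module.finrank k
    ((homogeneousSubmodule (Fin n) k t).map (Ideal.Quotient.mkₐ k I).toLinearMap)

/-- `Q` generates a reduction of `R/I` : `(Q + I)_t = R_t` for all large `t`. -/
def IsReductionOf {k : Type*} [Field k] {n : ℕ} (Q I : Ideal (MvPolynomial (Fin n) k)) : Prop :=
  ∃ N : ℕ, ∀ t ≥ N, ∀ p : MvPolynomial (Fin n) k, p.IsHomogeneous t → p ∈ Q ⊔ I

/-- The reduction number `r_Q(R/I)` : the least `r` such that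
`(Q + I)_t = R_t` for all `t > r`. -/
def redNum {k : Type*} [Field k] {n : ℕ} (Q I : Ideal (MvPolynomial (Fin n) k)) : ℕ :=
  sInf {r : ℕ | ∀ t > r, ∀ p : MvPolynomial (Fin n) k, p.IsHomogeneous t → p ∈ Q ⊔ I}

/-- `Q` is an `s`-reduction of `R/I` : it is generated by `s` linear forms and is a
reduction of `R/I`. -/
def IsSReduction {k : Type*} [Field k] {n : ℕ} (s : ℕ)
    (Q I : Ideal (MvPolynomial (Fin n) k)) : Prop :=
  (∃ z : Fin s → MvPolynomial (Fin n) k,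
      (∀ i, (z i).IsHomogeneous 1) ∧ Q = Ideal.span (Set.range z)) ∧
  IsReductionOf Q I

/-- The `s`-reduction number `r_s(R/I)` : the minimum of `r_Q(R/I)` over all
`s`-reductions `Q` of `R/I`. -/
def sRedNum {k : Type*} [Field k] {n : ℕ} (s : ℕ) (I : Ideal (MvPolynomial (Fin n) k)) : ℕ :=
  sInf {r : ℕ | ∃ Q, IsSReduction s Q I ∧ redNum Q I = r}

/-- Strong stability condition on a monomial ideal: if `x^A ∈ I` is divisible by `x_i`,
then `x^A x_j / x_i ∈ I` for all `j ≤ i`. -/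
def StronglyStable {k : Type*} [Field k] {n : ℕ} (I : Ideal (MvPolynomial (Fin n) k)) : Prop :=
  ∀ (A : Fin n →₀ ℕ) (i j : Fin n), monomial A (1 : k) ∈ I → A i ≠ 0 → j ≤ i →
    monomial (A - Finsupp.single i 1 + Finsupp.single j 1) (1 : k) ∈ I

/-- Lex-segment condition: if `x^A ∈ I` and `x^B ≥ x^A` in the lexicographic order
(with `x_1 > x_2 > ⋯ > x_n`) and `deg x^B = deg x^A`, then `x^B ∈ I`. -/
def IsLexSegment {k : Type*} [Field k] {n : ℕ} (I : Ideal (MvPolynomial (Fin n) k)) : Prop :=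
  ∀ A B : Fin n →₀ ℕ, monomial A (1 : k) ∈ I → monDeg B = monDeg A →
    Finsupp.Lex (· < ·) (· < ·) A B → monomial B (1 : k) ∈ I

/-- A homogeneous ideal: closed under taking homogeneous components. -/
def IsHomogeneousIdeal {k : Type*} [Field k] {n : ℕ} (I : Ideal (MvPolynomial (Fin n) k)) : Prop :=
  ∀ p ∈ I, ∀ t : ℕ, homogeneousComponent t p ∈ I

/-- The ideal generated by the last `s` variables `x_{n-s+1}, …, x_n`. -/
def lastVars (k : Type*) [Field k] (n s : ℕ) : Ideal (MvPolynomial (Fin n) k) :=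
  Ideal.span ((fun i => (X i : MvPolynomial (Fin n) k)) '' {i : Fin n | n - s ≤ (i : ℕ)})

/-!
Let `Q = (z_1, …, z_s)` be an `s`-reduction of `R/I`. Column elimination by a lower triangular
(Borel) substitution `g` moves all `z_i` into the span of the variables `x_j`, `j ∈ T`, for some
`|T| ≤ s`; as `g(I) = I`, whenever `(Q + I)_t = R_t` every monomial of degree `t` avoiding `T`
lies in `I`. A monomial of degree `t` in the first `n - s` variables uses at most as many
variables from `T` as there are last variables outside `T`; trading them for those larger
variables gives a monomial avoiding `T`, and the Borel moves `x_j^a ↦ x_i^a` (`i < j`) bring it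
back. So `(Q + I)_t = R_t` forces `(L + I)_t = R_t` for `L = (x_{n-s+1}, …, x_n)`, and `L`
realises the minimal reduction number.
-/

open Matrix

section LinearSubstitution

variable {R : Type*} [CommRing R] {σ : Type*} [Fintype σ]

def linearForm (v : σ → R) : MvPolynomial σ R := ∑ j, C (v j) * X j

def linSubst (M : Matrix σ σ R) : MvPolynomial σ R →ₐ[R] MvPolynomial σ R :=
  aeval fun i => ∑ j, C (M i j) * X j

theorem linSubst_X (M : Matrix σ σ R) (i : σ) : linSubst M (X i) = linearForm (M i) :=
  aeval_X _ i

theorem linSubst_C (M : Matrix σ σ R) (a : R) : linSubst M (C a) = C a :=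
  (linSubst M).commutes a

theorem linSubst_linearForm (M : Matrix σ σ R) (v : σ → R) :
    linSubst M (linearForm v) = linearForm (v ᵥ* M) := by
  simp only [linearForm, map_sum, map_mul, linSubst_X, linSubst_C, Finset.mul_sum, vecMul,
    dotProduct, Finset.sum_mul, ← mul_assoc]
  exact Finset.sum_comm

theorem linSubst_comp (M N : Matrix σ σ R) :
    (linSubst M).comp (linSubst N) = linSubst (N * M) := by
  refine algHom_ext fun i => ?_
  rw [AlgHom.comp_apply, linSubst_X, linSubst_X, linSubst_linearForm]
  rfl

theorem linSubst_one [DecidableEq σ] : linSubst (1 : Matrix σ σ R) = AlgHom.id R _ := by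
  refine algHom_ext fun i => ?_
  simp [linSubst_X, linearForm, Matrix.one_apply]

theorem isHomogeneous_linearForm (v : σ → R) : (linearForm v).IsHomogeneous 1 :=
  IsHomogeneous.sum _ _ _ fun j _ => isHomogeneous_C_mul_X (v j) j

theorem MvPolynomial.IsHomogeneous.linSubst {p : MvPolynomial σ R} {t : ℕ}
    (hp : p.IsHomogeneous t) (M : Matrix σ σ R) : (_root_.linSubst M p).IsHomogeneous t := by
  have h := hp.aeval (fun i => linearForm (M i)) fun i => isHomogeneous_linearForm (M i)
  rwa [one_mul] at h

theorem exists_linearForm_eq {p : MvPolynomial σ R} (hp : p.IsHomogeneous 1) :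
    ∃ v, linearForm v = p := by
  have hmem : p ∈ Submodule.span R (Set.range X) := by
    rw [← homogeneousSubmodule_one_eq_span_X]; exact hp
  obtain ⟨v, hv⟩ := Submodule.mem_span_range_iff_exists_fun R |>.1 hmem
  exact ⟨v, by simpa [linearForm, smul_eq_C_mul] using hv⟩

theorem linSubst_transvection_X [DecidableEq σ] (i j l : σ) (c : R) :
    linSubst (transvection i j c) (X l) = if l = i then X i + C c * X j else X l := by
  split_ifs with h
  · simp [h, linSubst_X, linearForm, transvection, Matrix.one_apply, Matrix.single_apply,
      Finset.sum_add_distrib, add_mul, apply_ite C, ite_mul]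
  · simp [linSubst_X, linearForm, transvection, Matrix.one_apply, Ne.symm h]

theorem linSubst_monomial_eq_self {M : Matrix σ σ R}
    {D : σ →₀ ℕ} (h : ∀ l ∈ D.support, linSubst M (X l) = X l) :
    linSubst M (monomial D 1) = monomial D 1 := by
  rw [monomial_eq, C_1, one_mul, map_finsuppProd]
  exact Finsupp.prod_congr fun l hl => by rw [map_pow, h l hl]

end LinearSubstitution

section Elimination

variable {K : Type*} [Field K] {ι : Type*} [Fintype ι] [LinearOrder ι]

theorem isUnit_det_of_isLowerTriangular {M : Matrix ι ι K} (hM : M.IsLowerTriangular)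
    (hdiag : ∀ i, M i i = 1) : IsUnit M.det := by
  simp [det_of_isLowerTriangular M hM, hdiag]

/-- The pivot `j₀` is the last nonzero entry of `w` off `T`, so clearing the other entries off `T`
only adds multiples of column `j₀` to earlier columns: a lower triangular operation. -/
theorem exists_isLowerTriangular_fixing_vecMul_eq_zero (w : ι → K) (T : Finset ι) :
    ∃ M : Matrix ι ι K, M.IsLowerTriangular ∧ IsUnit M.det ∧
      (∀ u : ι → K, (∀ j ∉ T, u j = 0) → u ᵥ* M = u) ∧
      ∃ T' : Finset ι, T ⊆ T' ∧ T'.card ≤ T.card + 1 ∧ ∀ j ∉ T', (w ᵥ* M) j = 0 := by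
  classical
  by_cases hw : ∀ j ∉ T, w j = 0
  · exact ⟨1, blockTriangular_one, by simp, fun u _ => vecMul_one u, T, subset_rfl,
      Nat.le_succ _, by simpa using hw⟩
  obtain ⟨j₁, hj₁T, hwj₁⟩ : ∃ j ∉ T, w j ≠ 0 := by simpa using hw
  have hG : (Finset.univ.filter fun j => j ∉ T ∧ w j ≠ 0).Nonempty := ⟨j₁, by simp [hj₁T, hwj₁]⟩
  set j₀ := (Finset.univ.filter fun j => j ∉ T ∧ w j ≠ 0).max' hG
  obtain ⟨hj₀T, hwj₀⟩ : j₀ ∉ T ∧ w j₀ ≠ 0 := by simpa using Finset.max'_mem _ hG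
  have hmax : ∀ l, j₀ < l → l ∉ T → w l = 0 := fun l hl hlT => by
    by_contra hwl
    exact (Finset.le_max' _ l (by simp [hlT, hwl])).not_gt hl
  set r : ι → K := fun l => if l ∈ T ∨ l = j₀ then 0 else -(w l / w j₀)
  have hvecMul (u : ι → K) : u ᵥ* (1 + vecMulVec (Pi.single j₀ 1) r) = u + u j₀ • r := by
    rw [vecMul_add, vecMul_one, vecMul_vecMulVec, dotProduct_single_one]
  have hlower : (1 + vecMulVec (Pi.single j₀ 1) r).IsLowerTriangular := by
    refine blockTriangular_one.add fun i l (hil : i < l) => ?_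
    rcases eq_or_ne i j₀ with rfl | hi
    · by_cases hlT : l ∈ T <;> simp [vecMulVec, r, hlT, hil.ne', hmax l hil]
    · simp [vecMulVec, hi]
  refine ⟨_, hlower, isUnit_det_of_isLowerTriangular hlower fun i => ?_, fun u hu => ?_,
    insert j₀ T, Finset.subset_insert _ _, Finset.card_insert_le _ _, fun j hj => ?_⟩
  · rcases eq_or_ne i j₀ with rfl | hi <;> simp [vecMulVec, r, *]
  · rw [hvecMul, hu j₀ hj₀T, zero_smul, add_zero]
  · obtain ⟨hjj₀, hjT⟩ : j ≠ j₀ ∧ j ∉ T := by simpa using hj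
    simp [hvecMul, r, hjj₀, hjT, mul_div_cancel₀ _ hwj₀]

theorem exists_isLowerTriangular_vecMul_eq_zero {s : ℕ} (v : Fin s → ι → K) :
    ∃ M : Matrix ι ι K, M.IsLowerTriangular ∧ IsUnit M.det ∧
      ∃ T : Finset ι, T.card ≤ s ∧ ∀ i, ∀ j ∉ T, (v i ᵥ* M) j = 0 := by
  induction s with
  | zero => exact ⟨1, blockTriangular_one, by simp, ∅, le_rfl, fun i => i.elim0⟩
  | succ s ih =>
    obtain ⟨M₁, hM₁, hdet₁, T₁, hT₁, hv₁⟩ := ih fun i => v i.succ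
    obtain ⟨M₂, hM₂, hdet₂, hfix, T, hsub, hT, hv₀⟩ :=
      exists_isLowerTriangular_fixing_vecMul_eq_zero (v 0 ᵥ* M₁) T₁
    refine ⟨M₁ * M₂, hM₁.mul hM₂, by simpa using hdet₁.mul hdet₂, T, by omega, fun i j hj => ?_⟩
    rw [← vecMul_vecMul]
    refine Fin.cases (hv₀ j hj) (fun i => ?_) i
    rw [hfix _ (hv₁ i), hv₁ i j fun h => hj (hsub h)]

end Elimination

theorem MvPolynomial.mem_of_forall_monomial_mem {R σ : Type*} [CommSemiring R]
    {J : Ideal (MvPolynomial σ R)} {p : MvPolynomial σ R}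
    (h : ∀ A ∈ p.support, monomial A 1 ∈ J) : p ∈ J := by
  rw [p.as_sum]
  refine J.sum_mem fun A hA => ?_
  simpa [C_mul_monomial] using J.mul_mem_left (C (p.coeff A)) (h A hA)

theorem MvPolynomial.monomial_mem_span_monomial_image {R σ : Type*} [CommSemiring R]
    {S : Set (σ →₀ ℕ)} {A B : σ →₀ ℕ} (hA : A ∈ S) (hAB : A ≤ B) :
    monomial B (1 : R) ∈ Ideal.span ((fun A => monomial A 1) '' S) :=
  mem_ideal_span_monomial_image.2 fun B' hB' => ⟨A, hA, by
    rwa [Finset.mem_singleton.1 (support_monomial_subset hB')]⟩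

section MonomialIdeal

variable {k : Type*} [Field k] {n : ℕ} {I : Ideal (MvPolynomial (Fin n) k)}

theorem IsMonomialIdeal.monomial_mem_of_mem (hI : IsMonomialIdeal I) {p : MvPolynomial (Fin n) k}
    (hp : p ∈ I) {A : Fin n →₀ ℕ} (hA : A ∈ p.support) : monomial A 1 ∈ I := by
  obtain ⟨S, rfl⟩ := hI
  obtain ⟨B, hB, hBA⟩ := mem_ideal_span_monomial_image.1 hp A hA
  exact monomial_mem_span_monomial_image hB hBA

theorem IsMonomialIdeal.monomial_mem_of_mem_span_X_sup (hI : IsMonomialIdeal I)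
    {T : Set (Fin n)} {B : Fin n →₀ ℕ} (hB : monomial B 1 ∈ Ideal.span (X '' T) ⊔ I)
    (hBT : ∀ j ∈ T, B j = 0) : monomial B 1 ∈ I := by
  obtain ⟨S, rfl⟩ := hI
  have hX : (X '' T : Set (MvPolynomial (Fin n) k)) =
      (fun A => monomial A 1) '' ((fun j => Finsupp.single j 1) '' T) := by
    rw [Set.image_image]; rfl
  rw [hX, ← Ideal.span_union, ← Set.image_union] at hB
  obtain ⟨B', hB', hB'B⟩ := mem_ideal_span_monomial_image.1 hB B (by simp)
  rcases hB' with ⟨j, hj, rfl⟩ | hB'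
  · simpa [hBT j hj] using hB'B j
  · exact monomial_mem_span_monomial_image hB' hB'B

end MonomialIdeal

section BorelFixed

variable {k : Type*} [Field k] {n : ℕ} {I : Ideal (MvPolynomial (Fin n) k)}

theorem IsBorelFixed.map_linSubst (hI : IsBorelFixed I) {M : Matrix (Fin n) (Fin n) k}
    (hM : M.IsLowerTriangular) (hdet : IsUnit M.det) : I.map (linSubst M) = I :=
  hI M hdet fun _ _ hij => hM hij

theorem IsBorelFixed.monomial_add_single_mem (hmon : IsMonomialIdeal I) (hI : IsBorelFixed I)
    {D : Fin n →₀ ℕ} {i j : Fin n} (hji : j < i) (hDi : D i = 0) (a : ℕ)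
    (h : monomial (D + Finsupp.single i a) 1 ∈ I) :
    monomial (D + Finsupp.single j a) 1 ∈ I := by
  set M := transvection i j (1 : k)
  have hM : M.IsLowerTriangular := fun l m (hlm : l < m) => by
    have : ¬(i = l ∧ j = m) := by rintro ⟨rfl, rfl⟩; exact hlm.not_gt hji
    simp [M, transvection, hlm.ne, this]
  have hdet : IsUnit M.det := by simp [M, det_transvection_of_ne _ _ hji.ne']
  have hsplit (l : Fin n) : monomial (D + Finsupp.single l a) (1 : k) = monomial D 1 * X l ^ a := by
    rw [X_pow_eq_monomial, monomial_mul, one_mul]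
  have hmem : monomial D 1 * (X i + X j) ^ a ∈ I := by
    have hfix : linSubst M (monomial D 1) = monomial D 1 :=
      linSubst_monomial_eq_self fun l hl => by
        rw [linSubst_transvection_X, if_neg (by rintro rfl; exact Finsupp.mem_support_iff.1 hl hDi)]
    have := Ideal.mem_map_of_mem (linSubst M) h
    rwa [hI.map_linSubst hM hdet, hsplit, map_mul, hfix, map_pow, linSubst_transvection_X,
      if_pos rfl, C_1, one_mul] at this
  -- the coefficient of `x^D x_j^a` in `x^D (x_i + x_j)^a` is `1` in every characteristic
  obtain ⟨q, hq⟩ : (X i : MvPolynomial (Fin n) k) ∣ (X i + X j) ^ a - X j ^ a := by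
    convert sub_dvd_pow_sub_pow (X i + X j) (X j : MvPolynomial (Fin n) k) a using 1
    ring
  have hexp : monomial D 1 * (X i + X j) ^ a =
      monomial (D + Finsupp.single j a) 1 + X i * (monomial D 1 * q) := by
    rw [← sub_add_cancel ((X i + X j) ^ a) (X j ^ a), hq, hsplit]
    ring
  refine hmon.monomial_mem_of_mem hmem (mem_support_iff.2 ?_)
  rw [hexp, coeff_add, coeff_monomial, if_pos rfl, coeff_X_mul', if_neg (by simp [hDi, hji.ne']),
    add_zero]
  exact one_ne_zero

end BorelFixed

section BorelShift

variable {k : Type*} [Field k] {n : ℕ} {I : Ideal (MvPolynomial (Fin n) k)}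

open Finset in
/-- Each variable of `x^A` indexed by `T` is traded for a distinct larger variable from `E`,
which leaves a monomial avoiding `T`; Borel moves bring it back to `x^A`. -/
theorem IsBorelFixed.monomial_mem_of_card_le (hmon : IsMonomialIdeal I) (hI : IsBorelFixed I)
    {T : Finset (Fin n)} {t : ℕ}
    (hT : ∀ B : Fin n →₀ ℕ, B.degree = t → (∀ j ∈ T, B j = 0) → monomial B (1 : k) ∈ I)
    (D : Finset (Fin n)) {A : Fin n →₀ ℕ} {E : Finset (Fin n)} (hA : A.degree = t)
    (hAD : A.support ∩ T ⊆ D) (hET : Disjoint E T) (hAE : ∀ j ∈ E, A j = 0)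
    (hDE : ∀ i ∈ D, ∀ j ∈ E, i < j) (hcard : #D ≤ #E) : monomial A 1 ∈ I := by
  induction D using Finset.induction_on generalizing A E with
  | empty =>
    refine hT A hA fun j hj => ?_
    by_contra hAj
    simpa using hAD (mem_inter.2 ⟨Finsupp.mem_support_iff.2 hAj, hj⟩)
  | insert i D hiD ih =>
    rw [card_insert_of_notMem hiD] at hcard
    obtain ⟨j, hj⟩ : E.Nonempty := card_pos.1 (by omega)
    have hjT : j ∉ T := disjoint_left.1 hET hj
    have hij : i < j := hDE i (mem_insert_self i D) j hj
    rw [← Finsupp.erase_add_single i A]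
    refine hI.monomial_add_single_mem hmon hij (by simp [Finsupp.erase_apply, hAE j hj]) (A i)
      (ih (E := E.erase j) ?_ ?_ (hET.mono_left (erase_subset j E)) ?_
        (fun l hl j' hj' => hDE l (mem_insert_of_mem hl) j' (mem_of_mem_erase hj')) ?_)
    · rw [map_add, Finsupp.degree_single, ← hA, ← Finsupp.erase_add_single i A, map_add,
        Finsupp.degree_single, Finsupp.erase_add_single]
    · intro l hl
      obtain ⟨hlA, hlT⟩ := mem_inter.1 hl
      have hlj : l ≠ j := by rintro rfl; exact hjT hlT
      have hli : l ≠ i := by rintro rfl; simp [hlj.symm] at hlA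
      have : l ∈ insert i D := hAD (mem_inter.2 ⟨by simpa [hlj, hli] using hlA, hlT⟩)
      exact (mem_insert.1 this).resolve_left hli
    · intro l hl
      obtain ⟨hlj, hlE⟩ := mem_erase.1 hl
      simp [Finsupp.erase_apply, hAE l hlE, hlj.symm]
    · rw [card_erase_of_mem hj]; omega

end BorelShift

/-- `J_t = R_t` in the paper's notation. -/
def ContainsDegree {R σ : Type*} [CommSemiring R] (J : Ideal (MvPolynomial σ R)) (t : ℕ) : Prop :=
  ∀ p : MvPolynomial σ R, p.IsHomogeneous t → p ∈ J

open Finset in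
theorem Fin.card_filter_sub_le_val {n s : ℕ} (hsn : s ≤ n) :
    #{j : Fin n | n - s ≤ (j : ℕ)} = s := by
  have h : (univ.filter fun j : Fin n => n - s ≤ (j : ℕ)).map Fin.valEmbedding = Ico (n - s) n := by
    ext m
    simp only [mem_map, mem_filter, mem_univ, true_and, Fin.valEmbedding_apply, mem_Ico]
    constructor
    · rintro ⟨j, hj, rfl⟩; omega
    · intro hm; exact ⟨⟨m, hm.2⟩, hm.1, rfl⟩
  rw [← card_map, h, Nat.card_Ico]; omega

section ReductionToLastVariables

variable {k : Type*} [Field k] {n : ℕ} {I : Ideal (MvPolynomial (Fin n) k)}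

theorem IsBorelFixed.containsDegree_span_linSubst (hI : IsBorelFixed I)
    {M : Matrix (Fin n) (Fin n) k} (hM : M.IsLowerTriangular) (hdet : IsUnit M.det)
    {ι : Type*} (z : ι → MvPolynomial (Fin n) k) {t : ℕ}
    (h : ContainsDegree (Ideal.span (Set.range z) ⊔ I) t) :
    ContainsDegree (Ideal.span (Set.range (linSubst M ∘ z)) ⊔ I) t := by
  intro p hp
  have hinv : linSubst M (linSubst M⁻¹ p) = p := by
    rw [← AlgHom.comp_apply, linSubst_comp, Matrix.nonsing_inv_mul _ hdet, linSubst_one]; rfl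
  rw [← hinv, ← hI.map_linSubst hM hdet, Set.range_comp, ← Ideal.map_span, ← Ideal.map_sup]
  exact Ideal.mem_map_of_mem _ (h _ (hp.linSubst _))

theorem IsBorelFixed.exists_forall_monomial_mem (hmon : IsMonomialIdeal I) (hI : IsBorelFixed I)
    {s : ℕ} {z : Fin s → MvPolynomial (Fin n) k} (hz : ∀ i, (z i).IsHomogeneous 1) {t : ℕ}
    (h : ContainsDegree (Ideal.span (Set.range z) ⊔ I) t) :
    ∃ T : Finset (Fin n), T.card ≤ s ∧
      ∀ B : Fin n →₀ ℕ, B.degree = t → (∀ j ∈ T, B j = 0) → monomial B (1 : k) ∈ I := by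
  choose v hv using fun i => exists_linearForm_eq (hz i)
  obtain ⟨M, hM, hdet, T, hTs, hvT⟩ := exists_isLowerTriangular_vecMul_eq_zero v
  have hspan : Ideal.span (Set.range (linSubst M ∘ z)) ≤ Ideal.span (X '' (T : Set (Fin n))) := by
    rw [Ideal.span_le]
    rintro _ ⟨i, rfl⟩
    rw [Function.comp_apply, ← hv i, linSubst_linearForm]
    refine Ideal.sum_mem _ fun j _ => ?_
    by_cases hj : j ∈ T
    · exact Ideal.mul_mem_left _ _ (Ideal.subset_span ⟨j, hj, rfl⟩)
    · simp [hvT i j hj]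
  refine ⟨T, hTs, fun B hB hBT => hmon.monomial_mem_of_mem_span_X_sup ?_ hBT⟩
  exact sup_le_sup_right hspan I
    (hI.containsDegree_span_linSubst hM hdet z h _ (isHomogeneous_monomial _ hB))

open Finset in
theorem IsBorelFixed.monomial_mem_of_lt_sub (hmon : IsMonomialIdeal I) (hI : IsBorelFixed I)
    {s : ℕ} (hsn : s ≤ n) {T : Finset (Fin n)} (hTs : #T ≤ s) {t : ℕ}
    (hT : ∀ B : Fin n →₀ ℕ, B.degree = t → (∀ j ∈ T, B j = 0) → monomial B (1 : k) ∈ I)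
    {A : Fin n →₀ ℕ} (hA : A.degree = t) (hlow : ∀ i ∈ A.support, (i : ℕ) < n - s) :
    monomial A 1 ∈ I := by
  set H : Finset (Fin n) := {j | n - s ≤ (j : ℕ)}
  have hcard : #(A.support ∩ T) ≤ #(H \ T) := by
    have hsub : A.support ∩ T ⊆ T \ H := fun i hi => by
      simp only [mem_inter, mem_sdiff, H, mem_filter, mem_univ, true_and, not_le] at hi ⊢
      exact ⟨hi.2, hlow i hi.1⟩
    have hH : #H = s := Fin.card_filter_sub_le_val hsn
    have hTH := card_sdiff_add_card_inter T H
    have hHT := card_sdiff_add_card_inter H T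
    rw [inter_comm] at hHT
    have := card_le_card hsub
    omega
  refine hI.monomial_mem_of_card_le hmon hT (A.support ∩ T) hA subset_rfl sdiff_disjoint
    (fun j hj => ?_) (fun i hi j hj => ?_) hcard
  · have hj' : n - s ≤ (j : ℕ) := by simpa [H] using (mem_sdiff.1 hj).1
    by_contra hAj
    exact (hlow j (Finsupp.mem_support_iff.2 hAj)).not_ge hj'
  · have := hlow i (mem_inter.1 hi).1
    have : n - s ≤ (j : ℕ) := by simpa [H] using (mem_sdiff.1 hj).1
    omega

theorem IsBorelFixed.containsDegree_lastVars_sup (hmon : IsMonomialIdeal I) (hI : IsBorelFixed I)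
    {s : ℕ} (hsn : s ≤ n) {z : Fin s → MvPolynomial (Fin n) k} (hz : ∀ i, (z i).IsHomogeneous 1)
    {t : ℕ} (h : ContainsDegree (Ideal.span (Set.range z) ⊔ I) t) :
    ContainsDegree (lastVars k n s ⊔ I) t := by
  obtain ⟨T, hTs, hT⟩ := hI.exists_forall_monomial_mem hmon hz h
  intro p hp
  refine mem_of_forall_monomial_mem fun A hA => ?_
  by_cases hlow : ∀ i ∈ A.support, (i : ℕ) < n - s
  · have hAt : A.degree = t := by
      by_contra hne
      exact mem_support_iff.1 hA (hp.coeff_eq_zero hne)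
    exact Ideal.mem_sup_right (hI.monomial_mem_of_lt_sub hmon hsn hTs hT hAt hlow)
  · push Not at hlow
    obtain ⟨i, hi, hin⟩ := hlow
    refine Ideal.mem_sup_left (mem_ideal_span_X_image.2 fun A' hA' => ⟨i, hin, ?_⟩)
    rwa [Finset.mem_singleton.1 (support_monomial_subset hA'), ← Finsupp.mem_support_iff]

end ReductionToLastVariables

section ReductionNumber

variable {k : Type*} [Field k] {n : ℕ} {Q L I : Ideal (MvPolynomial (Fin n) k)}

theorem IsReductionOf.of_containsDegree (hQ : IsReductionOf Q I)
    (hQL : ∀ t, ContainsDegree (Q ⊔ I) t → ContainsDegree (L ⊔ I) t) : IsReductionOf L I :=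
  let ⟨N, hN⟩ := hQ
  ⟨N, fun t ht => hQL t (hN t ht)⟩

theorem redNum_le_of_containsDegree (hQ : IsReductionOf Q I)
    (hQL : ∀ t, ContainsDegree (Q ⊔ I) t → ContainsDegree (L ⊔ I) t) :
    redNum L I ≤ redNum Q I := by
  obtain ⟨N, hN⟩ := hQ
  have hmem := Nat.sInf_mem (s := {r | ∀ t > r, ContainsDegree (Q ⊔ I) t})
    ⟨N, fun t ht => hN t ht.le⟩
  exact Nat.sInf_le fun t ht => hQL t (hmem t ht)

theorem redNum_eq_zero_of_not_isReductionOf (h : ¬IsReductionOf Q I) : redNum Q I = 0 := by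
  refine Nat.sInf_eq_zero.2 (Or.inr (Set.eq_empty_of_forall_notMem fun r hr => h ?_))
  exact ⟨r + 1, fun t ht => hr t (by omega)⟩

theorem sRedNum_eq_redNum_of_containsDegree {s : ℕ}
    (hL : ∃ z : Fin s → MvPolynomial (Fin n) k,
      (∀ i, (z i).IsHomogeneous 1) ∧ L = Ideal.span (Set.range z))
    (hQL : ∀ Q, IsSReduction s Q I → ∀ t, ContainsDegree (Q ⊔ I) t → ContainsDegree (L ⊔ I) t) :
    sRedNum s I = redNum L I := by
  by_cases hex : ∃ Q, IsSReduction s Q I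
  · obtain ⟨Q, hQ⟩ := hex
    have hLs : IsSReduction s L I := ⟨hL, hQ.2.of_containsDegree (hQL Q hQ)⟩
    refine le_antisymm (Nat.sInf_le ⟨L, hLs, rfl⟩) (le_csInf ⟨_, L, hLs, rfl⟩ ?_)
    rintro _ ⟨Q', hQ', rfl⟩
    exact redNum_le_of_containsDegree hQ'.2 (hQL Q' hQ')
  · push Not at hex
    have hempty : {r | ∃ Q, IsSReduction s Q I ∧ redNum Q I = r} = ∅ :=
      Set.eq_empty_of_forall_notMem fun _ ⟨Q, hQ, _⟩ => hex Q hQ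
    rw [redNum_eq_zero_of_not_isReductionOf fun h => hex L ⟨hL, h⟩, sRedNum, hempty,
      Nat.sInf_empty]

theorem lastVars_eq_span_range {s : ℕ} (hsn : s ≤ n) :
    ∃ z : Fin s → MvPolynomial (Fin n) k,
      (∀ i, (z i).IsHomogeneous 1) ∧ lastVars k n s = Ideal.span (Set.range z) := by
  refine ⟨fun i => X ⟨n - s + i, by omega⟩, fun i => isHomogeneous_X _ _, ?_⟩
  rw [lastVars]
  congr 1
  ext p
  simp only [Set.mem_image, Set.mem_ofPred_eq, Set.mem_range]
  constructor
  · rintro ⟨j, hj, rfl⟩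
    exact ⟨⟨j - (n - s), by omega⟩, by congr 1; ext; simp; omega⟩
  · rintro ⟨i, rfl⟩
    exact ⟨_, Nat.le_add_right _ _, rfl⟩

end ReductionNumber

theorem stmt11_general {k : Type*} [Field k] {n : ℕ} (I : Ideal (MvPolynomial (Fin n) k))
    (hmon : IsMonomialIdeal I) (hborel : IsBorelFixed I)
    (s : ℕ) (hsn : s ≤ n) :
    sRedNum s I = redNum (lastVars k n s) I :=
  sRedNum_eq_redNum_of_containsDegree (lastVars_eq_span_range hsn)
    fun _ ⟨⟨_, hz, hQ⟩, _⟩ _ => hQ ▸ hborel.containsDegree_lastVars_sup hmon hsn hz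

/-- For a Borel-fixed ideal `I` and `s ≥ d = dim R/I`,
`r_s(R/I) = r_{(x_{n-s+1},…,x_n)}(R/I)`. -/
theorem stmt11 {k : Type*} [Field k] {n : ℕ} (I : Ideal (MvPolynomial (Fin n) k))
    (hmon : IsMonomialIdeal I) (hborel : IsBorelFixed I)
    (s : ℕ) (hsn : s ≤ n)
    (hdim : ringKrullDim (MvPolynomial (Fin n) k ⧸ I) ≤ (s : ℕ)) :
    sRedNum s I = redNum (lastVars k n s) I :=
  stmt11_general I hmon hborel s hsn
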